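/- arXiv:2312.10205 — 7 statements merged into one kernel-verified Lean document; each statement's English description precedes it below -/
import Mathlib

section
/- Let V be a differentiable, monotone increasing, concave value function with V(0)=0, and suppose the impatience distribution F_{1-γ} has density f_{1-γ}. If for all p ≤ p*, the inverse hazard rate satisfies (1 - F_{1-γ}(p/V(p)))/f_{1-γ}(p/V(p)) ≥ (p/V(p))·(1 - p·V'(p)/V(p)), then the derivative of revenue R(p) = p·(1 - F_{1-γ}(p/V(p))) is nonnegative on [0, p*], and hence the revenue-optimal price is at least p*. -/
/-!
On `(0, p*]` the hazard-rate condition, multiplied by `f₁ > 0`, says exactly that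
`R' = (1 - F₁(x)) - x (1 - p V'/V) f₁(x)` is nonnegative, where `x = p / V p`, so `R`
increases on `(0, p*]`. Concavity and `V 0 = 0` give `p V'(p) ≤ V(p)`, so the same condition
also forces `1 - F₁(x) ≥ 0`: every right slope `R(p)/p` of `R` at `0` is nonnegative, whence
`R'(0) ≥ 0` (when it exists), and `R(0) = 0 ≤ R(p*)`.
-/

open Set Filter Topology

noncomputable def revenue (F V : ℝ → ℝ) (p : ℝ) : ℝ :=
  p * (1 - F (p / V p))

theorem revenue_zero (F V : ℝ → ℝ) : revenue F V 0 = 0 := by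
  simp [revenue]

theorem slope_revenue_zero (F V : ℝ → ℝ) {p : ℝ} (hp : p ≠ 0) :
    slope (revenue F V) 0 p = 1 - F (p / V p) := by
  rw [slope_def_field, revenue_zero, sub_zero, sub_zero, revenue, mul_div_cancel_left₀ _ hp]

theorem hasDerivAt_revenue {F V : ℝ → ℝ} {f v p : ℝ} (hV : HasDerivAt V v p) (hVp : V p ≠ 0)
    (hF : HasDerivAt F f (p / V p)) :
    HasDerivAt (revenue F V) (1 - F (p / V p) - p / V p * (1 - p * v / V p) * f) p := by
  have hx : HasDerivAt (fun q => q / V q) ((1 * V p - p * v) / V p ^ 2) p :=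
    (hasDerivAt_id' p).div hV hVp
  have h : HasDerivAt (revenue F V) (1 * (1 - F (p / V p)) + p * -(f * _)) p :=
    (hasDerivAt_id' p).mul ((hF.comp p hx).const_sub 1)
  convert h using 1
  field_simp
  ring

theorem ConcaveOn.mul_le_of_hasDerivAt_of_map_zero {V : ℝ → ℝ} {v p : ℝ}
    (hV : ConcaveOn ℝ (Ici 0) V) (hV0 : V 0 = 0) (hp : 0 < p) (hv : HasDerivAt V v p) :
    p * v ≤ V p := by
  have h := hV.le_slope_of_hasDerivAt self_mem_Ici (mem_Ici.mpr hp.le) hp hv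
  rwa [slope_def_field, hV0, sub_zero, sub_zero, le_div_iff₀ hp, mul_comm] at h

theorem one_sub_nonneg_of_hazard_bound {F V : ℝ → ℝ} {f v p : ℝ}
    (hV : ConcaveOn ℝ (Ici 0) V) (hV0 : V 0 = 0) (hp : 0 < p) (hVp : 0 < V p)
    (hv : HasDerivAt V v p) (hf : 0 < f)
    (h : p / V p * (1 - p * v / V p) * f ≤ 1 - F (p / V p)) :
    0 ≤ 1 - F (p / V p) := by
  have hpv : p * v / V p ≤ 1 :=
    (div_le_one hVp).mpr (hV.mul_le_of_hasDerivAt_of_map_zero hV0 hp hv)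
  exact (mul_nonneg (mul_nonneg (div_nonneg hp.le hVp.le) (sub_nonneg.mpr hpv)) hf.le).trans h

theorem deriv_nonneg_of_eventually_slope_nonneg {g : ℝ → ℝ} {a : ℝ}
    (h : ∀ᶠ y in 𝓝[>] a, 0 ≤ slope g a y) : 0 ≤ deriv g a := by
  by_cases hg : DifferentiableAt ℝ g a
  · exact ge_of_tendsto (hasDerivAt_iff_tendsto_slope_left_right.mp hg.hasDerivAt).2 h
  · rw [deriv_zero_of_not_differentiableAt hg]

theorem revenue_derivative_nonneg_general
    (F₁ f₁ V V' : ℝ → ℝ) (pstar : ℝ) (hpstar : 0 < pstar)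
    (hV0 : V 0 = 0)
    (hVpos : ∀ p : ℝ, 0 < p → 0 < V p)
    (hVconc : ConcaveOn ℝ (Set.Ici 0) V)
    (hV' : ∀ p : ℝ, HasDerivAt V (V' p) p)
    (hF₁' : ∀ x : ℝ, HasDerivAt F₁ (f₁ x) x)
    (hf₁pos : ∀ x : ℝ, 0 < f₁ x)
    (hcond : ∀ p ∈ Set.Icc 0 pstar,
      (1 - F₁ (p / V p)) / f₁ (p / V p)
        ≥ (p / V p) * (1 - p * V' p / V p)) :
    (∀ p ∈ Set.Icc 0 pstar,
        0 ≤ deriv (fun q => q * (1 - F₁ (q / V q))) p) ∧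
      ∀ p ∈ Set.Icc 0 pstar,
        p * (1 - F₁ (p / V p)) ≤ pstar * (1 - F₁ (pstar / V pstar)) := by
  have hderiv p (hp : 0 < p) := hasDerivAt_revenue (hV' p) (hVpos p hp).ne' (hF₁' (p / V p))
  have hcond_mul p (hp : p ∈ Ioc 0 pstar) :
      p / V p * (1 - p * V' p / V p) * f₁ (p / V p) ≤ 1 - F₁ (p / V p) :=
    (le_div_iff₀ (hf₁pos _)).mp (hcond p (Ioc_subset_Icc_self hp))
  have hsurvival p (hp : p ∈ Ioc 0 pstar) : 0 ≤ 1 - F₁ (p / V p) :=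
    one_sub_nonneg_of_hazard_bound hVconc hV0 hp.1 (hVpos p hp.1) (hV' p) (hf₁pos _)
      (hcond_mul p hp)
  have hmono : MonotoneOn (revenue F₁ V) (Ioc 0 pstar) := by
    refine monotoneOn_of_hasDerivWithinAt_nonneg (convex_Ioc 0 pstar)
      (fun p hp => (hderiv p hp.1).continuousAt.continuousWithinAt)
      (fun p hp => (hderiv p (interior_subset hp).1).hasDerivWithinAt) fun p hp => ?_
    exact sub_nonneg.mpr (hcond_mul p (interior_subset hp))
  refine ⟨fun p hp => ?_, fun p hp => ?_⟩
  · change 0 ≤ deriv (revenue F₁ V) p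
    rcases hp.1.eq_or_lt with rfl | hp0
    · refine deriv_nonneg_of_eventually_slope_nonneg ?_
      filter_upwards [Ioo_mem_nhdsGT hpstar] with q hq
      rw [slope_revenue_zero F₁ V hq.1.ne']
      exact hsurvival q (Ioo_subset_Ioc_self hq)
    · rw [(hderiv p hp0).deriv]
      exact sub_nonneg.mpr (hcond_mul p ⟨hp0, hp.2⟩)
  · change revenue F₁ V p ≤ revenue F₁ V pstar
    rcases hp.1.eq_or_lt with rfl | hp0
    · rw [revenue_zero]
      exact mul_nonneg hpstar.le (hsurvival pstar ⟨hpstar, le_rfl⟩)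
    · exact hmono ⟨hp0, hp.2⟩ ⟨hpstar, le_rfl⟩ hp.2

/-- If for all `p ≤ p*` the inverse hazard rate of the impatience distribution at
`p / V(p)` dominates `(p/V(p))·(1 - p·V'(p)/V(p))`, then the derivative of the
revenue `R(p) = p·(1 - F_{1-γ}(p / V(p)))` is nonnegative on `[0, p*]`, and hence
the revenue-optimal price is at least `p*` (every price below `p*` earns no more
revenue than `p*` itself). -/
theorem revenue_derivative_nonneg
    (F₁ f₁ V V' : ℝ → ℝ) (pstar : ℝ) (hpstar : 0 < pstar)
    (hV0 : V 0 = 0)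
    (hVpos : ∀ p : ℝ, 0 < p → 0 < V p)
    (hVmono : MonotoneOn V (Set.Ici 0))
    (hVconc : ConcaveOn ℝ (Set.Ici 0) V)
    (hV' : ∀ p : ℝ, HasDerivAt V (V' p) p)
    (hF₁' : ∀ x : ℝ, HasDerivAt F₁ (f₁ x) x)
    (hf₁pos : ∀ x : ℝ, 0 < f₁ x)
    (hcond : ∀ p ∈ Set.Icc 0 pstar,
      (1 - F₁ (p / V p)) / f₁ (p / V p)
        ≥ (p / V p) * (1 - p * V' p / V p)) :
    (∀ p ∈ Set.Icc 0 pstar,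
        0 ≤ deriv (fun q => q * (1 - F₁ (q / V q))) p) ∧
      ∀ p ∈ Set.Icc 0 pstar,
        p * (1 - F₁ (p / V p)) ≤ pstar * (1 - F₁ (pstar / V pstar)) :=
  revenue_derivative_nonneg_general F₁ f₁ V V' pstar hpstar hV0 hVpos hVconc hV' hF₁' hf₁pos hcond
end

section
/- Suppose the utility-optimal price equals the maximal price p_x (where V(p_x) = p_x and the value function is flat above p_x). Then setting the revenue-optimal price p_rev achieves expected utility at least UTIL_max − s_rev·(p_x − p_rev), where s_rev = V'(p_rev) is the slope of the value function at p_rev and UTIL_max is the optimal expected utility. -/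
open MeasureTheory Set

/-! The value function is concave, so its tangent line at `p_rev` lies above it:
`V p_x - V p_rev ≤ V'(p_rev) (p_x - p_rev)`. At the flat price `p_x` every player of type
`γ ∈ [0, 1]` gets utility `γ p_x`, and `γ p_x ≤ γ V(p_rev) + (p_x - V(p_rev))` because
`V(p_rev) ≤ p_x`; so raising the price from `p_rev` to `p_x` gains each player at most
`V p_x - V p_rev`, and integrating over `γ` gives the bound. -/

theorem ConcaveOn.sub_le_mul_sub_of_hasDerivAt {S : Set ℝ} {f : ℝ → ℝ} {x y f' : ℝ}
    (hf : ConcaveOn ℝ S f) (hx : x ∈ S) (hy : y ∈ S) (hxy : x ≤ y) (hf' : HasDerivAt f f' x) :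
    f y - f x ≤ f' * (y - x) := by
  rcases hxy.eq_or_lt with rfl | hlt
  · simp
  have hslope := hf.slope_le_of_hasDerivAt hx hy hlt hf'
  rw [slope_def_field, div_le_iff₀ (sub_pos.mpr hlt)] at hslope
  linarith

theorem Continuous.integrable_of_ae_mem_isCompact {X : Type*} [TopologicalSpace X]
    [MeasurableSpace X] [OpensMeasurableSpace X] [T2Space X] {μ : Measure X}
    [IsFiniteMeasureOnCompacts μ] {f : X → ℝ} {K : Set X} (hf : Continuous f)
    (hK : IsCompact K) (hμ : ∀ᵐ x ∂μ, x ∈ K) : Integrable f μ := by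
  rw [← Measure.restrict_eq_self_of_ae_mem hμ]
  exact hf.continuousOn.integrableOn_compact hK

theorem mul_le_max_mul_sub_add_sub {γ v p x : ℝ} (hγ : γ ≤ 1) (hvx : v ≤ x) :
    γ * x ≤ max (γ * v) (v - p) + (x - v) := by
  nlinarith [le_max_left (γ * v) (v - p)]

theorem revenue_optimal_price_near_optimal_utility_general
    (μ : Measure ℝ) [IsProbabilityMeasure μ]
    (hsupp : μ (Set.Icc (0:ℝ) 1)ᶜ = 0)
    (V V' : ℝ → ℝ) (px prev : ℝ) (hpx : 0 < px)
    (hVpx : V px = px)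
    (hVmono : MonotoneOn V (Set.Icc 0 px))
    (hVconc : ConcaveOn ℝ (Set.Icc 0 px) V)
    (hV' : ∀ p ∈ Set.Icc (0:ℝ) px, HasDerivAt V (V' p) p)
    (hprev : prev ∈ Set.Icc (0:ℝ) px) :
    (∫ γ, max (γ * V px) (V px - px) ∂μ) - V' prev * (px - prev)
      ≤ ∫ γ, max (γ * V prev) (V prev - prev) ∂μ := by
  have htype : ∀ᵐ γ ∂μ, γ ∈ Icc (0:ℝ) 1 := mem_ae_iff.mpr hsupp
  have hint : ∀ c d : ℝ, Integrable (fun γ : ℝ => max (γ * c) d) μ := fun c d =>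
    (by fun_prop : Continuous fun γ : ℝ => max (γ * c) d).integrable_of_ae_mem_isCompact
      isCompact_Icc htype
  have hpx_mem : px ∈ Icc 0 px := right_mem_Icc.mpr hpx.le
  have htangent : V px - V prev ≤ V' prev * (px - prev) :=
    hVconc.sub_le_mul_sub_of_hasDerivAt hprev hpx_mem hprev.2 (hV' prev hprev)
  have hVprev : V prev ≤ px := hVpx ▸ hVmono hprev hpx_mem hprev.2
  have hgain : ∀ᵐ γ ∂μ, max (γ * V px) (V px - px)
      ≤ max (γ * V prev) (V prev - prev) + (V px - V prev) := by
    filter_upwards [htype] with γ hγ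
    rw [hVpx, sub_self, max_eq_left (mul_nonneg hγ.1 hpx.le)]
    exact mul_le_max_mul_sub_add_sub hγ.2 hVprev
  have hmean : (∫ γ, max (γ * V px) (V px - px) ∂μ)
      ≤ (∫ γ, max (γ * V prev) (V prev - prev) ∂μ) + (V px - V prev) := calc
    _ ≤ ∫ γ, (max (γ * V prev) (V prev - prev) + (V px - V prev)) ∂μ :=
      integral_mono_ae (hint _ _) ((hint _ _).add (integrable_const _)) hgain
    _ = _ := by simp [integral_add (hint _ _) (integrable_const _)]
  linarith

/-- If the utility-optimal price equals the maximal price `p_x` (where `V(p_x) = p_x`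
and `V` is flat above `p_x`), then the revenue-optimal price `p_rev` achieves
expected utility at least `UTIL_max − V'(p_rev)·(p_x − p_rev)`. -/
theorem revenue_optimal_price_near_optimal_utility
    (μ : Measure ℝ) [IsProbabilityMeasure μ]
    (hsupp : μ (Set.Icc (0:ℝ) 1)ᶜ = 0)
    (V V' : ℝ → ℝ) (px prev : ℝ) (hpx : 0 < px)
    (hV0 : V 0 = 0) (hVpx : V px = px)
    (hVflat : ∀ p : ℝ, px ≤ p → V p = px)
    (hVmono : MonotoneOn V (Set.Icc 0 px))
    (hVconc : ConcaveOn ℝ (Set.Icc 0 px) V)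
    (hV' : ∀ p ∈ Set.Icc (0:ℝ) px, HasDerivAt V (V' p) p)
    -- the utility-optimal price is `px`
    (hutilopt : ∀ p ∈ Set.Icc (0:ℝ) px,
      (∫ γ, max (γ * V p) (V p - p) ∂μ) ≤ ∫ γ, max (γ * V px) (V px - px) ∂μ)
    -- `prev` is the revenue-optimal price
    (hprev : prev ∈ Set.Icc (0:ℝ) px)
    (hrevopt : IsMaxOn (fun p => p * (μ {γ : ℝ | p ≤ (1 - γ) * V p}).toReal)
      (Set.Icc (0:ℝ) px) prev) :
    (∫ γ, max (γ * V px) (V px - px) ∂μ) - V' prev * (px - prev)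
      ≤ ∫ γ, max (γ * V prev) (V prev - prev) ∂μ :=
  revenue_optimal_price_near_optimal_utility_general μ hsupp V V' px prev hpx hVpx hVmono hVconc hV'
    hprev
end

section
/- For a distribution F on [0,∞) with monotone hazard rate, the revenue-maximizing posted price p* (satisfying p* = (1−F(p*))/f(p*)) has probability of sale at least 1/e, i.e., 1 − F(p*) ≥ 1/e. -/
/-!
Write `S = 1 - F` for the survival function and `H = -log S` for the cumulative hazard, so that
`H(0) = 0` and `H' = f / S` is the hazard rate. Under MHR the hazard rate is nondecreasing, hence
`H(p) ≤ p · (f p / S p)` by the mean value theorem, and the first-order condition says exactly that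
the right-hand side is `1` at `p = p*`. Thus `S(p*) = exp (-H(p*)) ≥ exp (-1)`.
-/

open Set Real

noncomputable section

def hazardRate (F f : ℝ → ℝ) (x : ℝ) : ℝ := f x / (1 - F x)

def cumulativeHazard (F : ℝ → ℝ) (x : ℝ) : ℝ := -Real.log (1 - F x)

end

theorem hasDerivAt_cumulativeHazard {F f : ℝ → ℝ} {x : ℝ}
    (hF : HasDerivAt F (f x) x) (hx : F x < 1) :
    HasDerivAt (cumulativeHazard F) (hazardRate F f x) x := by
  unfold cumulativeHazard hazardRate
  simpa only [neg_div, neg_neg] using ((hF.const_sub 1).log (sub_ne_zero.2 hx.ne')).fun_neg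

theorem one_sub_eq_exp_neg_cumulativeHazard {F : ℝ → ℝ} {x : ℝ} (hx : F x < 1) :
    1 - F x = Real.exp (-cumulativeHazard F x) := by
  rw [cumulativeHazard, neg_neg, Real.exp_log (sub_pos.2 hx)]

theorem monotoneOn_of_hasDerivAt_nonneg {D : Set ℝ} (hD : Convex ℝ D) {g g' : ℝ → ℝ}
    (hg : ∀ x ∈ D, HasDerivAt g (g' x) x) (hg' : ∀ x ∈ D, 0 ≤ g' x) : MonotoneOn g D :=
  monotoneOn_of_deriv_nonneg hD (fun x hx => (hg x hx).continuousAt.continuousWithinAt)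
    (fun x hx => (hg x (interior_subset hx)).differentiableAt.differentiableWithinAt)
    (fun x hx => (hg x (interior_subset hx)).deriv ▸ hg' x (interior_subset hx))

theorem sub_le_mul_sub_of_monotoneOn_hasDerivAt {g g' : ℝ → ℝ} {a b : ℝ} (hab : a ≤ b)
    (hg : ∀ x ∈ Icc a b, HasDerivAt g (g' x) x) (hg' : MonotoneOn g' (Icc a b)) :
    g b - g a ≤ g' b * (b - a) := by
  have hb : b ∈ Icc a b := right_mem_Icc.2 hab
  refine (convex_Icc a b).image_sub_le_mul_sub_of_deriv_le
    (fun x hx => (hg x hx).continuousAt.continuousWithinAt)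
    (fun x hx => (hg x (interior_subset hx)).differentiableAt.differentiableWithinAt)
    (fun x hx => ?_) a (left_mem_Icc.2 hab) b hb hab
  rw [(hg x (interior_subset hx)).deriv]
  exact hg' (interior_subset hx) hb (interior_subset hx).2

theorem cumulativeHazard_sub_le_mul_hazardRate {F f : ℝ → ℝ} {a b : ℝ} (hab : a ≤ b)
    (hF : ∀ x ∈ Icc a b, HasDerivAt F (f x) x) (hlt : ∀ x ∈ Icc a b, F x < 1)
    (hMHR : MonotoneOn (hazardRate F f) (Icc a b)) :
    cumulativeHazard F b - cumulativeHazard F a ≤ hazardRate F f b * (b - a) :=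
  sub_le_mul_sub_of_monotoneOn_hasDerivAt hab
    (fun x hx => hasDerivAt_cumulativeHazard (hF x hx) (hlt x hx)) hMHR

theorem myerson_price_sale_probability_general
    (F f : ℝ → ℝ) (pstar : ℝ)
    (hF0 : F 0 = 0)
    (hF' : ∀ x : ℝ, 0 ≤ x → HasDerivAt F (f x) x)
    (hfpos : ∀ x : ℝ, 0 ≤ x → 0 < f x)
    (hMHR : MonotoneOn (fun x => f x / (1 - F x)) (Set.Ici 0))
    (hpstar : 0 ≤ pstar)
    (hfoc : pstar = (1 - F pstar) / f pstar) :
    1 / Real.exp 1 ≤ 1 - F pstar := by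
  have hfp : 0 < f pstar := hfpos pstar hpstar
  have hrevenue : pstar * f pstar = 1 - F pstar := (eq_div_iff hfp.ne').1 hfoc
  have hsale : 0 < 1 - F pstar := by
    rcases hpstar.eq_or_lt with h0 | hp
    · simp [← h0, hF0]
    · rw [← hrevenue]
      positivity
  have hrate : hazardRate F f pstar * pstar = 1 := by
    rw [hazardRate, div_mul_eq_mul_div, mul_comm, hrevenue, div_self hsale.ne']
  have hmono : MonotoneOn F (Ici 0) :=
    monotoneOn_of_hasDerivAt_nonneg (convex_Ici 0) hF' fun x hx => (hfpos x hx).le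
  have hlt : ∀ x ∈ Icc 0 pstar, F x < 1 := fun x hx =>
    (hmono hx.1 (mem_Ici.2 hpstar) hx.2).trans_lt (by linarith)
  have hH : cumulativeHazard F pstar ≤ 1 := by
    simpa [cumulativeHazard, hF0, hrate] using
      cumulativeHazard_sub_le_mul_hazardRate hpstar (fun x hx => hF' x hx.1) hlt
        (hMHR.mono Icc_subset_Ici_self)
  rw [one_sub_eq_exp_neg_cumulativeHazard (hlt pstar ⟨hpstar, le_rfl⟩), one_div, ← exp_neg]
  exact exp_le_exp.2 (neg_le_neg hH)

/-- For an MHR distribution on `[0,∞)`, the revenue-maximizing posted price `p*`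
(characterized by `p* = (1 − F(p*))/f(p*)`) sells with probability at least `1/e`. -/
theorem myerson_price_sale_probability
    (F f : ℝ → ℝ) (pstar : ℝ)
    (hF0 : F 0 = 0) (hF1 : ∀ x : ℝ, F x ≤ 1)
    (hF' : ∀ x : ℝ, 0 ≤ x → HasDerivAt F (f x) x)
    (hfpos : ∀ x : ℝ, 0 ≤ x → 0 < f x)
    (hMHR : MonotoneOn (fun x => f x / (1 - F x)) (Set.Ici 0))
    (hpstar : 0 ≤ pstar)
    (hopt : IsMaxOn (fun p => p * (1 - F p)) (Set.Ici 0) pstar)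
    (hfoc : pstar = (1 - F pstar) / f pstar) :
    1 / Real.exp 1 ≤ 1 - F pstar :=
  myerson_price_sale_probability_general F f pstar hF0 hF' hfpos hMHR hpstar hfoc
end

section
/- For any distribution F on [0,∞) with monotone hazard rate and random variable X ~ F, the expected value E[X] is at most e times the optimal posted-price revenue: E[X] ≤ e · max_p p(1−F(p)). -/
/-!
The cumulative hazard `H = -log (1 - F)` has derivative `f / (1 - F)`, so under MHR it is convex,
with `H 0 = 0`. Take `q` with `H q = 1`, i.e. `1 - F q = e⁻¹`, so that posting the price `q`
earns `q / e`. The tangent to `H` at `q` has slope `s ≥ 1 / q` (it passes below the origin), and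
`H ≥ max 0 (1 + s (x - q))`. Hence the survival function is dominated by that of the shifted
exponential `c + Exp(s)` with `c = q - 1 / s`, whose mean is exactly `q`. Integrating by parts,
`E[X] ≤ ∫ (1 - F) ≤ q = e · (q / e)`.
-/

open Set Filter MeasureTheory Real Topology

theorem lt_of_hasDerivAt_pos_of_le {F : ℝ → ℝ} {f' b x : ℝ} (hF : HasDerivAt F f' x)
    (hf' : 0 < f') (hb : ∀ y, F y ≤ b) : F x < b :=
  (hb x).lt_of_ne fun hx =>
    hf'.ne' <| IsLocalMax.hasDerivAt_eq_zero (Eventually.of_forall fun y => hx ▸ hb y) hF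

theorem add_mul_sub_le_of_monotoneOn_deriv {φ φ' : ℝ → ℝ} {S : Set ℝ} [S.OrdConnected]
    (hφ : ∀ x ∈ S, HasDerivAt φ (φ' x) x) (hφ' : MonotoneOn φ' S) {x y : ℝ}
    (hx : x ∈ S) (hy : y ∈ S) : φ x + φ' x * (y - x) ≤ φ y := by
  have mean_value : ∀ a ∈ S, ∀ b ∈ S, a < b → ∃ z ∈ Ioo a b, φ' z * (b - a) = φ b - φ a := by
    intro a ha b hb hab
    have hab' : Icc a b ⊆ S := S.Icc_subset ha hb
    obtain ⟨z, hz, hslope⟩ := exists_hasDerivAt_eq_slope φ φ' hab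
      (fun z hz => (hφ z (hab' hz)).continuousAt.continuousWithinAt)
      (fun z hz => hφ z (hab' (Ioo_subset_Icc_self hz)))
    exact ⟨z, hz, by rw [hslope, div_mul_cancel₀ _ (sub_ne_zero.2 hab.ne')]⟩
  rcases lt_trichotomy x y with hxy | rfl | hxy
  · obtain ⟨z, hz, hφz⟩ := mean_value x hx y hy hxy
    have : φ' x ≤ φ' z :=
      hφ' hx (S.Icc_subset hx hy (Ioo_subset_Icc_self hz)) hz.1.le
    nlinarith
  · simp
  · obtain ⟨z, hz, hφz⟩ := mean_value y hy x hx hxy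
    have : φ' z ≤ φ' x :=
      hφ' (S.Icc_subset hy hx (Ioo_subset_Icc_self hz)) hx hz.2.le
    nlinarith

theorem exists_gt_eq_of_tendsto {F : ℝ → ℝ} {a y b : ℝ} (hF : ContinuousOn F (Ici a))
    (hay : F a < y) (hyb : y < b) (hFtop : Tendsto F atTop (𝓝 b)) : ∃ q, a < q ∧ F q = y := by
  obtain ⟨M, hyM, haM⟩ :=
    ((hFtop.eventually (eventually_gt_nhds hyb)).and (eventually_ge_atTop a)).exists
  obtain ⟨q, hq, hFq⟩ :=
    intermediate_value_Ioo haM (hF.mono Icc_subset_Ici_self) ⟨hay, hyM⟩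
  exact ⟨q, hq.1, hFq⟩

theorem integrableOn_exp_neg_max_zero_mul_sub {s : ℝ} (hs : 0 < s) (a c : ℝ) :
    IntegrableOn (fun x => exp (-max 0 (s * (x - c)))) (Ioi a) := by
  refine ((exp_neg_integrableOn_Ioi a hs).const_mul (exp (s * c))).mono'
    (by fun_prop) (Eventually.of_forall fun x => ?_)
  rw [norm_of_nonneg (exp_pos _).le, ← exp_add]
  exact exp_le_exp.2 (by linarith [le_max_right 0 (s * (x - c))])

theorem integral_Ioi_exp_neg_max_zero_mul_sub {s c : ℝ} (hs : 0 < s) (hc : 0 ≤ c) :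
    ∫ x in Ioi 0, exp (-max 0 (s * (x - c))) = c + s⁻¹ := by
  have hhead : ∫ x in Ioc 0 c, exp (-max 0 (s * (x - c))) = c := by
    rw [setIntegral_congr_fun measurableSet_Ioc (g := fun _ => (1 : ℝ)) fun x hx => by
      simp [max_eq_left (mul_nonpos_of_nonneg_of_nonpos hs.le (sub_nonpos.2 hx.2))]]
    simp [hc]
  have htail : ∫ x in Ioi c, exp (-max 0 (s * (x - c))) = s⁻¹ := by
    rw [setIntegral_congr_fun measurableSet_Ioi (g := fun x => exp (s * c) * exp (-s * x))
      fun x hx => by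
        rw [max_eq_right (mul_nonneg hs.le (sub_nonneg.2 (le_of_lt hx)))]
        simp only [← exp_add]; ring_nf]
    rw [integral_const_mul, integral_exp_mul_Ioi (neg_lt_zero.2 hs), mul_div_assoc', mul_neg,
      ← exp_add]
    simp
  rw [← Ioc_union_Ioi_eq_Ioi hc, setIntegral_union (Ioc_disjoint_Ioi le_rfl) measurableSet_Ioi
    ((integrableOn_exp_neg_max_zero_mul_sub hs 0 c).mono_set Ioc_subset_Ioi_self)
    (integrableOn_exp_neg_max_zero_mul_sub hs c c), hhead, htail]

theorem one_sub_le_exp_neg_max_of_monotoneOn_hazard {F f : ℝ → ℝ} {q : ℝ} (hF0 : F 0 = 0)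
    (hFmono : MonotoneOn F (Ici 0)) (hF' : ∀ x, 0 ≤ x → HasDerivAt F (f x) x)
    (hS : ∀ x, 0 ≤ x → 0 < 1 - F x) (hMHR : MonotoneOn (fun x => f x / (1 - F x)) (Ici 0))
    (hq : 0 ≤ q) (hFq : 1 - F q = exp (-1)) :
    ∃ s c, 0 < s ∧ 0 ≤ c ∧ c + s⁻¹ = q ∧
      ∀ x, 0 ≤ x → 1 - F x ≤ exp (-max 0 (s * (x - c))) := by
  set H : ℝ → ℝ := fun x => -log (1 - F x)
  have hH' : ∀ x ∈ Ici (0 : ℝ), HasDerivAt H (f x / (1 - F x)) x := fun x hx => by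
    simpa [H, neg_div] using (((hF' x hx).const_sub 1).log (hS x hx).ne').fun_neg
  have hH0 : ∀ x, 0 ≤ x → 0 ≤ H x := fun x hx => by
    have : F 0 ≤ F x := hFmono self_mem_Ici (mem_Ici.2 hx) hx
    exact neg_nonneg.2 <| log_nonpos (hS x hx).le (by linarith)
  set s := f q / (1 - F q)
  have htangent : ∀ x, 0 ≤ x → 1 + s * (x - q) ≤ H x := fun x hx => by
    simpa [H, s, hFq] using add_mul_sub_le_of_monotoneOn_deriv hH' hMHR hq (mem_Ici.2 hx)
  have hsq : 1 ≤ s * q := by linarith [htangent 0 le_rfl, show H 0 = 0 by simp [H, hF0]]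
  have hs : 0 < s := pos_of_mul_pos_left (one_pos.trans_le hsq) hq
  refine ⟨s, q - s⁻¹, hs, ?_, by ring, fun x hx => ?_⟩
  · rwa [sub_nonneg, inv_le_iff_one_le_mul₀ hs, mul_comm]
  calc 1 - F x = exp (-H x) := by simp [H, exp_log (hS x hx)]
    _ ≤ exp (-max 0 (s * (x - (q - s⁻¹)))) := by
      refine exp_le_exp.2 (neg_le_neg (max_le (hH0 x hx) ?_))
      rw [mul_sub, mul_sub, mul_inv_cancel₀ hs.ne']
      linarith [htangent x hx]

theorem integral_mul_deriv_eq_mul_sub_integral {F f : ℝ → ℝ} {a b : ℝ}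
    (hF' : ∀ x ∈ uIcc a b, HasDerivAt F (f x) x)
    (hint : IntervalIntegrable (fun x => x * f x) volume a b) :
    ∫ x in a..b, x * f x = b * F b - a * F a - ∫ x in a..b, F x := by
  have hFint : IntervalIntegrable F volume a b :=
    ContinuousOn.intervalIntegrable fun x hx => (hF' x hx).continuousAt.continuousWithinAt
  have := intervalIntegral.integral_eq_sub_of_hasDerivAt
    (fun x hx => by simpa using (hasDerivAt_id x).mul (hF' x hx)) (hFint.add hint)
  rw [intervalIntegral.integral_add hFint hint] at this
  simp only [Pi.mul_apply, id_eq] at this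
  linarith

theorem setIntegral_Ioi_mul_deriv_le {F f g : ℝ → ℝ} (hF1 : ∀ x, F x ≤ 1)
    (hF' : ∀ x, 0 ≤ x → HasDerivAt F (f x) x) (hint : IntegrableOn (fun x => x * f x) (Ioi 0))
    (hg : IntegrableOn g (Ioi 0)) (hFg : ∀ x, 0 ≤ x → 1 - F x ≤ g x) :
    ∫ x in Ioi 0, x * f x ≤ ∫ x in Ioi 0, g x := by
  refine le_of_tendsto (intervalIntegral_tendsto_integral_Ioi 0 hint tendsto_id) ?_
  filter_upwards [eventually_ge_atTop 0] with M hM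
  have hF'M : ∀ x ∈ uIcc 0 M, HasDerivAt F (f x) x := fun x hx =>
    hF' x (uIcc_of_le hM ▸ hx).1
  have hFint : IntervalIntegrable F volume 0 M :=
    ContinuousOn.intervalIntegrable fun x hx => (hF'M x hx).continuousAt.continuousWithinAt
  have hSint : IntervalIntegrable (fun x => 1 - F x) volume 0 M :=
    intervalIntegrable_const.sub hFint
  have hibp := integral_mul_deriv_eq_mul_sub_integral hF'M
    ((intervalIntegrable_iff_integrableOn_Ioc_of_le hM).2 (hint.mono_set Ioc_subset_Ioi_self))
  calc ∫ x in 0..M, x * f x ≤ ∫ x in 0..M, (1 - F x) := by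
        rw [hibp, intervalIntegral.integral_sub intervalIntegrable_const hFint]
        simp only [intervalIntegral.integral_const, sub_zero, smul_eq_mul, mul_one, zero_mul]
        nlinarith [hF1 M]
    _ ≤ ∫ x in 0..M, g x := intervalIntegral.integral_mono_on hM hSint
        ((intervalIntegrable_iff_integrableOn_Ioc_of_le hM).2 (hg.mono_set Ioc_subset_Ioi_self))
        fun x hx => hFg x hx.1
    _ ≤ ∫ x in Ioi 0, g x := by
      rw [intervalIntegral.integral_of_le hM]
      exact setIntegral_mono_set hg
        (ae_restrict_of_forall_mem measurableSet_Ioi fun x hx =>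
          (sub_nonneg.2 (hF1 x)).trans (hFg x hx.le))
        Ioc_subset_Ioi_self.eventuallyLE

/-- For an MHR distribution on `[0,∞)` with CDF `F`, density `f`, and finite
expectation, the expected value is at most `e` times the optimal posted-price
revenue `sup_p p·(1 − F(p))`. -/
theorem expectation_le_e_times_revenue
    (F f : ℝ → ℝ) (R : ℝ)
    (hF0 : F 0 = 0) (hF1 : ∀ x : ℝ, F x ≤ 1)
    (hFmono : Monotone F)
    (hFtop : Filter.Tendsto F Filter.atTop (nhds 1))
    (hF' : ∀ x : ℝ, 0 ≤ x → HasDerivAt F (f x) x)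
    (hfpos : ∀ x : ℝ, 0 ≤ x → 0 < f x)
    (hMHR : MonotoneOn (fun x => f x / (1 - F x)) (Set.Ici 0))
    (hint : MeasureTheory.IntegrableOn (fun x => x * f x) (Set.Ioi 0))
    (hR : IsLUB {r : ℝ | ∃ p : ℝ, 0 ≤ p ∧ r = p * (1 - F p)} R) :
    (∫ x in Set.Ioi (0:ℝ), x * f x) ≤ Real.exp 1 * R := by
  have hS : ∀ x, 0 ≤ x → 0 < 1 - F x := fun x hx =>
    sub_pos.2 (lt_of_hasDerivAt_pos_of_le (hF' x hx) (hfpos x hx) hF1)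
  obtain ⟨q, hq, hFq⟩ := exists_gt_eq_of_tendsto
    (fun x hx => (hF' x hx).continuousAt.continuousWithinAt)
    (by rw [hF0]; exact sub_pos.2 (exp_lt_one_iff.2 neg_one_lt_zero))
    (sub_lt_self 1 (exp_pos (-1))) hFtop
  have hSq : 1 - F q = exp (-1) := by rw [hFq]; ring
  obtain ⟨s, c, hs, hc, hcs, hsurv⟩ := one_sub_le_exp_neg_max_of_monotoneOn_hazard hF0
    (hFmono.monotoneOn _) hF' hS hMHR hq.le hSq
  have hrevenue : q * exp (-1) ≤ R := hR.1 ⟨q, hq.le, by rw [hSq]⟩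
  calc ∫ x in Ioi 0, x * f x ≤ ∫ x in Ioi 0, exp (-max 0 (s * (x - c))) :=
        setIntegral_Ioi_mul_deriv_le hF1 hF' hint (integrableOn_exp_neg_max_zero_mul_sub hs 0 c)
          hsurv
    _ = exp 1 * (q * exp (-1)) := by
        rw [integral_Ioi_exp_neg_max_zero_mul_sub hs hc, hcs, mul_left_comm, ← exp_add]; simp
    _ ≤ exp 1 * R := mul_le_mul_of_nonneg_left hrevenue (exp_pos 1).le
end

section
/- There exists a two-block task instance with a discrete type distribution in which selling skips at two prices (one for skipping both blocks, one for skipping only the last block) yields strictly more revenue than the optimal single skip price. Concretely, with v = 1, types γ ∈ {0.25, 0.75} each with probability 1/2, marginal value (1−γ²) for skipping both blocks and (1−γ) for skipping the last block: prices (13/16, 1/4) are incentive compatible (the low-γ type weakly prefers buying both blocks, the high-γ type weakly prefers waiting then buying the last block) and yield expected revenue 0.5·(13/16) + 0.5·(1/4) = 17/32 ≈ 0.53, whereas the best single first-round skip price yields at most 0.46875. -/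
/-! A posted price `q` for skipping the whole task sells to every type whose marginal value
`1 - γ²` is at least `q`, so the only prices worth considering are the two marginal values
`0.9375` and `0.4375`; they earn `0.46875` and `0.4375`, while the two-price menu earns
`17/32`. -/

theorem two_type_posted_price_revenue_le {wa wb a b : ℝ} (hwa : 0 ≤ wa) (hwb : 0 ≤ wb)
    (hb : 0 ≤ b) (hba : b ≤ a) (q : ℝ) :
    (if q ≤ a then wa * q else 0) + (if q ≤ b then wb * q else 0) ≤ max (wa * a) ((wa + wb) * b) := by
  split_ifs with hqa hqb hqb
  · calc wa * q + wb * q = (wa + wb) * q := by ring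
      _ ≤ (wa + wb) * b := by gcongr
      _ ≤ _ := le_max_right _ _
  · simpa using (mul_le_mul_of_nonneg_left hqa hwa).trans (le_max_left _ _)
  · exact absurd (hqb.trans hba) hqa
  · simpa using (by positivity : 0 ≤ (wa + wb) * b).trans (le_max_right _ _)

/-- A two-block task instance (v = 1, types 0.25 and 0.75 each with probability 1/2)
where selling two skips at prices (13/16, 1/4) is incentive compatible, yields
revenue 17/32, and strictly beats every single first-round skip price, whose
revenue is at most 0.46875. -/
theorem multi_skip_beats_single_skip :
    let γh : ℝ := 0.25
    let γl : ℝ := 0.75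
    let p₀ : ℝ := 13 / 16
    let p₁ : ℝ := 1 / 4
    -- the high (impatient, γ = 0.25) type weakly prefers buying both blocks
    ((1 - γh ^ 2) - p₀ ≥ γh * ((1 - γh) - p₁)) ∧
    (0 ≤ (1 - γh ^ 2) - p₀) ∧
    -- the low (patient, γ = 0.75) type weakly prefers waiting then buying
    (γl * ((1 - γl) - p₁) ≥ (1 - γl ^ 2) - p₀) ∧
    (0 ≤ γl * ((1 - γl) - p₁)) ∧
    -- two-price revenue
    ((1 / 2) * p₀ + (1 / 2) * p₁ = 17 / 32) ∧
    -- any single first-round skip price earns at most 0.46875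
    (∀ q : ℝ, 0 ≤ q →
      (if q ≤ 1 - γh ^ 2 then (1 / 2) * q else 0)
        + (if q ≤ 1 - γl ^ 2 then (1 / 2) * q else 0) ≤ 0.46875) ∧
    ((0.46875 : ℝ) < 17 / 32) := by
  refine ⟨by norm_num, by norm_num, by norm_num, by norm_num, by norm_num, fun q _ => ?_, by norm_num⟩
  calc _ ≤ max (1 / 2 * (1 - 0.25 ^ 2)) ((1 / 2 + 1 / 2) * (1 - 0.75 ^ 2)) :=
        two_type_posted_price_revenue_le (by norm_num) (by norm_num) (by norm_num) (by norm_num) q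
    _ = 0.46875 := by norm_num
end

section
/- Suppose the marginal value distribution satisfies MHR, the retention distribution satisfies retention regularity, and in the case p_ret ≤ p^Myerson the Myerson threshold price p_ret is charged. Then the single-round revenue of Myerson Threshold pricing is at least (1/e) times the single-round revenue of the known-types seller, and every player retained under the known-types optimal prices is also retained under MT pricing. -/
/-!
Under MHR the Myerson price `p_M` satisfies `p_M f(p_M) = 1 - F(p_M)`, and the derivative of
`(1 - F x) e^{x/p_M}` has the sign of `(1 - F x)/f x - p_M`, so this function increases up to
`p_M` and decreases after it. Hence `1 - F x ≤ (1 - F p_M) e^{1 - x/p_M}`, which integrates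
to `E[X] ≤ e · p_M (1 - F p_M)`, and `1 - F p ≥ e^{-p/p_M} ≥ 1/e` for `p ≤ p_M`. The
known-types revenue `E[min(X, p_ret)]` is at most both `E[X]` and `p_ret`, which settles the
two cases of `min(p_ret, p_M)`. Retention holds because MT never charges more than `p_ret`.
-/

open Real Set intervalIntegral

section Survival

variable {F f : ℝ → ℝ}

lemma hasDerivAt_survival_mul_exp (hF : ∀ x, HasDerivAt F (f x) x) (c x : ℝ) :
    HasDerivAt (fun y => (1 - F y) * exp (y / c)) (exp (x / c) * ((1 - F x) / c - f x)) x :=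
  (((hF x).const_sub 1).mul ((hasDerivAt_id' x).div_const c).exp).congr_deriv (by ring)

lemma monotoneOn_survival_mul_exp (hF : ∀ x, HasDerivAt F (f x) x) {a b c : ℝ} (hc : 0 < c)
    (hfc : ∀ x ∈ Ioo a b, c * f x ≤ 1 - F x) :
    MonotoneOn (fun y => (1 - F y) * exp (y / c)) (Icc a b) := by
  refine monotoneOn_of_hasDerivWithinAt_nonneg (convex_Icc a b)
    (HasDerivAt.continuousOn fun x _ => hasDerivAt_survival_mul_exp hF c x)
    (fun x _ => (hasDerivAt_survival_mul_exp hF c x).hasDerivWithinAt) fun x hx => ?_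
  rw [interior_Icc] at hx
  have : f x ≤ (1 - F x) / c := by rw [le_div_iff₀ hc]; linarith [hfc x hx]
  exact mul_nonneg (exp_pos _).le (sub_nonneg.2 this)

lemma antitoneOn_survival_mul_exp (hF : ∀ x, HasDerivAt F (f x) x) {a b c : ℝ} (hc : 0 < c)
    (hfc : ∀ x ∈ Ioo a b, 1 - F x ≤ c * f x) :
    AntitoneOn (fun y => (1 - F y) * exp (y / c)) (Icc a b) := by
  refine antitoneOn_of_hasDerivWithinAt_nonpos (convex_Icc a b)
    (HasDerivAt.continuousOn fun x _ => hasDerivAt_survival_mul_exp hF c x)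
    (fun x _ => (hasDerivAt_survival_mul_exp hF c x).hasDerivWithinAt) fun x hx => ?_
  rw [interior_Icc] at hx
  have : (1 - F x) / c ≤ f x := by rw [div_le_iff₀ hc]; linarith [hfc x hx]
  exact mul_nonpos_of_nonneg_of_nonpos (exp_pos _).le (sub_nonpos.2 this)

end Survival

section Myerson

variable {F f : ℝ → ℝ} {v pM : ℝ}

lemma lt_of_isMaxOn_revenue (hmono : Monotone F) (hFv : F v = 1) {q : ℝ} (hq : 0 ≤ q)
    (hrev : 0 < q * (1 - F q)) (hpM : IsMaxOn (fun q => q * (1 - F q)) (Ici 0) pM)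
    (hpM0 : 0 ≤ pM) : pM < v := by
  by_contra! h
  have hF1 : 1 ≤ F pM := hFv ▸ hmono h
  have := isMaxOn_iff.1 hpM q hq
  nlinarith

lemma mem_Ioo_of_isMaxOn_revenue (hF : ∀ x, HasDerivAt F (f x) x) (hf : ∀ x, 0 ≤ f x)
    (hfpos : ∀ x ∈ Ioo 0 v, 0 < f x) (hv : 0 < v) (hFv : F v = 1)
    (hpM : IsMaxOn (fun q => q * (1 - F q)) (Ici 0) pM) (hpM0 : 0 < pM) : pM ∈ Ioo 0 v := by
  have hFsm : StrictMonoOn F (Icc 0 v) :=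
    strictMonoOn_of_hasDerivWithinAt_pos (convex_Icc 0 v)
      (HasDerivAt.continuousOn fun x _ => hF x) (fun x _ => (hF x).hasDerivWithinAt)
      fun x hx => hfpos x (by rwa [interior_Icc] at hx)
  have hhalf : F (v / 2) < 1 :=
    hFv ▸ hFsm ⟨by linarith, by linarith⟩ ⟨hv.le, le_rfl⟩ (by linarith)
  exact ⟨hpM0, lt_of_isMaxOn_revenue (monotone_of_hasDerivAt_nonneg hF hf) hFv
    (by positivity) (mul_pos (half_pos hv) (sub_pos.2 hhalf)) hpM hpM0.le⟩

lemma mul_density_eq_survival_of_isMaxOn (hF : HasDerivAt F (f pM) pM)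
    (hpM : IsMaxOn (fun q => q * (1 - F q)) (Ici 0) pM) (hpM0 : 0 < pM) :
    pM * f pM = 1 - F pM := by
  have := (hpM.isLocalMax (Ici_mem_nhds hpM0)).hasDerivAt_eq_zero
    ((hasDerivAt_id' pM).mul (hF.const_sub 1))
  linarith

lemma mul_density_le_survival_of_mhr (hfpos : ∀ x ∈ Ioo 0 v, 0 < f x)
    (hMHR : AntitoneOn (fun x => (1 - F x) / f x) (Icc 0 v)) (hFOC : pM * f pM = 1 - F pM)
    (hpM : pM ∈ Ioo 0 v) {x : ℝ} (hx : x ∈ Ioo 0 pM) : pM * f x ≤ 1 - F x := by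
  have : (1 - F pM) / f pM ≤ (1 - F x) / f x :=
    hMHR ⟨hx.1.le, (hx.2.trans hpM.2).le⟩ ⟨hpM.1.le, hpM.2.le⟩ hx.2.le
  rwa [← hFOC, mul_div_cancel_right₀ _ (hfpos pM hpM).ne',
    le_div_iff₀ (hfpos x ⟨hx.1, hx.2.trans hpM.2⟩)] at this

lemma survival_le_mul_density_of_mhr (hfpos : ∀ x ∈ Ioo 0 v, 0 < f x)
    (hMHR : AntitoneOn (fun x => (1 - F x) / f x) (Icc 0 v)) (hFOC : pM * f pM = 1 - F pM)
    (hpM : pM ∈ Ioo 0 v) {x : ℝ} (hx : x ∈ Ioo pM v) : 1 - F x ≤ pM * f x := by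
  have : (1 - F x) / f x ≤ (1 - F pM) / f pM :=
    hMHR ⟨hpM.1.le, hpM.2.le⟩ ⟨(hpM.1.trans hx.1).le, hx.2.le⟩ hx.1.le
  rwa [← hFOC, mul_div_cancel_right₀ _ (hfpos pM hpM).ne',
    div_le_iff₀ (hfpos x ⟨hpM.1.trans hx.1, hx.2⟩)] at this

lemma survival_le_of_mhr (hF : ∀ x, HasDerivAt F (f x) x) (hfpos : ∀ x ∈ Ioo 0 v, 0 < f x)
    (hMHR : AntitoneOn (fun x => (1 - F x) / f x) (Icc 0 v)) (hFOC : pM * f pM = 1 - F pM)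
    (hpM : pM ∈ Ioo 0 v) {x : ℝ} (hx : x ∈ Icc 0 v) :
    1 - F x ≤ (1 - F pM) * exp 1 * exp (-(x / pM)) := by
  set ψ := fun y => (1 - F y) * exp (y / pM)
  have hψ : ψ x ≤ ψ pM := by
    rcases le_total x pM with h | h
    · exact monotoneOn_survival_mul_exp hF hpM.1
        (fun y hy => mul_density_le_survival_of_mhr hfpos hMHR hFOC hpM hy)
        ⟨hx.1, h⟩ ⟨hpM.1.le, le_rfl⟩ h
    · exact antitoneOn_survival_mul_exp hF hpM.1
        (fun y hy => survival_le_mul_density_of_mhr hfpos hMHR hFOC hpM hy)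
        ⟨le_rfl, hpM.2.le⟩ ⟨h, hx.2⟩ h
  calc 1 - F x = ψ x * exp (-(x / pM)) := by simp only [ψ, mul_assoc, ← exp_add]; simp
    _ ≤ ψ pM * exp (-(x / pM)) := mul_le_mul_of_nonneg_right hψ (exp_pos _).le
    _ = (1 - F pM) * exp 1 * exp (-(x / pM)) := by simp [ψ, div_self hpM.1.ne']

lemma exp_neg_one_le_survival_of_mhr (hF : ∀ x, HasDerivAt F (f x) x) (hF0 : F 0 = 0)
    (hfpos : ∀ x ∈ Ioo 0 v, 0 < f x) (hMHR : AntitoneOn (fun x => (1 - F x) / f x) (Icc 0 v))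
    (hFOC : pM * f pM = 1 - F pM) (hpM : pM ∈ Ioo 0 v) {p : ℝ} (hp : p ∈ Icc 0 pM) :
    exp (-1) ≤ 1 - F p := by
  set ψ := fun y => (1 - F y) * exp (y / pM)
  have hψ : ψ 0 ≤ ψ p := monotoneOn_survival_mul_exp hF hpM.1
    (fun y hy => mul_density_le_survival_of_mhr hfpos hMHR hFOC hpM hy)
    ⟨le_rfl, hpM.1.le⟩ hp hp.1
  calc exp (-1) ≤ exp (-(p / pM)) := by
        gcongr; exact (div_le_one hpM.1).2 hp.2
    _ = ψ 0 * exp (-(p / pM)) := by simp [ψ, hF0]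
    _ ≤ ψ p * exp (-(p / pM)) := mul_le_mul_of_nonneg_right hψ (exp_pos _).le
    _ = 1 - F p := by simp only [ψ, mul_assoc, ← exp_add]; simp

end Myerson

section Revenue

variable {F f : ℝ → ℝ} {v : ℝ}

lemma intervalIntegrable_density (hF : ∀ x, HasDerivAt F (f x) x) (hf : ∀ x, 0 ≤ f x)
    (a b : ℝ) : IntervalIntegrable f MeasureTheory.volume a b :=
  intervalIntegrable_deriv_of_nonneg (HasDerivAt.continuousOn fun x _ => hF x)
    (fun x _ => hF x) fun x _ => hf x

lemma integral_mul_density_mono (hF : ∀ x, HasDerivAt F (f x) x) (hf : ∀ x, 0 ≤ f x)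
    {g h : ℝ → ℝ} (hg : Continuous g) (hh : Continuous h) {a b : ℝ} (hab : a ≤ b)
    (hgh : ∀ x ∈ Icc a b, g x ≤ h x) :
    ∫ x in a..b, g x * f x ≤ ∫ x in a..b, h x * f x :=
  integral_mono_on hab
    ((intervalIntegrable_density hF hf a b).continuousOn_mul hg.continuousOn)
    ((intervalIntegrable_density hF hf a b).continuousOn_mul hh.continuousOn)
    fun x hx => mul_le_mul_of_nonneg_right (hgh x hx) (hf x)

lemma integral_mul_density_eq (hF : ∀ x, HasDerivAt F (f x) x) (hf : ∀ x, 0 ≤ f x) :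
    ∫ x in 0..v, x * f x = ∫ x in 0..v, (F v - F x) := by
  have hFc : Continuous F := continuous_iff_continuousAt.2 fun x => (hF x).continuousAt
  rw [integral_mul_deriv_eq_deriv_mul (fun x _ => hasDerivAt_id' x) (fun x _ => hF x)
    intervalIntegrable_const (intervalIntegrable_density hF hf 0 v),
    integral_sub intervalIntegrable_const (hFc.intervalIntegrable 0 v), integral_const]
  simp

lemma integral_exp_neg_div_le {c : ℝ} (hc : 0 < c) (v : ℝ) :
    ∫ x in 0..v, exp (-(x / c)) ≤ c := by
  have hderiv : ∀ x, HasDerivAt (fun y => -c * exp (-(y / c))) (exp (-(x / c))) x := fun x =>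
    ((((hasDerivAt_id' x).div_const c).fun_neg.exp).const_mul (-c)).congr_deriv (by field_simp)
  rw [integral_eq_sub_of_hasDerivAt (fun x _ => hderiv x)
    (Continuous.intervalIntegrable (by fun_prop) _ _)]
  simp only [zero_div, neg_zero, exp_zero]
  nlinarith [mul_pos hc (exp_pos (-(v / c)))]

lemma integral_mul_density_le_of_mhr {pM : ℝ} (hF : ∀ x, HasDerivAt F (f x) x)
    (hf : ∀ x, 0 ≤ f x) (hFv : F v = 1) (hfpos : ∀ x ∈ Ioo 0 v, 0 < f x)
    (hMHR : AntitoneOn (fun x => (1 - F x) / f x) (Icc 0 v)) (hFOC : pM * f pM = 1 - F pM)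
    (hpM : pM ∈ Ioo 0 v) :
    ∫ x in 0..v, x * f x ≤ exp 1 * (pM * (1 - F pM)) := by
  have hFc : Continuous F := continuous_iff_continuousAt.2 fun x => (hF x).continuousAt
  have hsurv : 0 ≤ 1 - F pM := hFOC ▸ mul_nonneg hpM.1.le (hf pM)
  calc ∫ x in 0..v, x * f x = ∫ x in 0..v, (1 - F x) := by
        rw [integral_mul_density_eq hF hf, hFv]
    _ ≤ ∫ x in 0..v, (1 - F pM) * exp 1 * exp (-(x / pM)) :=
        integral_mono_on (hpM.1.trans hpM.2).le
          (Continuous.intervalIntegrable (by fun_prop) _ _)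
          (Continuous.intervalIntegrable (by fun_prop) _ _)
          fun x hx => survival_le_of_mhr hF hfpos hMHR hFOC hpM hx
    _ ≤ (1 - F pM) * exp 1 * pM := by
        rw [integral_const_mul]
        exact mul_le_mul_of_nonneg_left (integral_exp_neg_div_le hpM.1 v) (by positivity)
    _ = exp 1 * (pM * (1 - F pM)) := by ring

end Revenue

lemma max_sub_min_le_max_sub_min (γ v p q : ℝ) :
    max (γ * v) (v - min ((1 - γ) * v) p) ≤ max (γ * v) (v - min p q) := by
  rcases le_total ((1 - γ) * v) p with h | h
  · rw [min_eq_left h, show v - (1 - γ) * v = γ * v by ring, max_self]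
    exact le_max_left _ _
  · rw [min_eq_right h]
    exact max_le_max le_rfl (by linarith [min_le_left p q])

theorem MT_pricing_single_round_general
    (v pret pM : ℝ) (hv : 0 < v)
    (hpretpos : 0 < pret)
    (F f : ℝ → ℝ)
    (hF0 : F 0 = 0) (hFv : F v = 1)
    (hF' : ∀ x : ℝ, HasDerivAt F (f x) x)
    (hfnonneg : ∀ x : ℝ, 0 ≤ f x)
    (hfpos : ∀ x ∈ Set.Ioo (0:ℝ) v, 0 < f x)
    (hMHR : AntitoneOn (fun x => (1 - F x) / f x) (Set.Icc 0 v))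
    (hpM : IsMaxOn (fun q => q * (1 - F q)) (Set.Ici 0) pM) (hpMpos : 0 < pM) :
    -- (1) MT revenue is at least a 1/e fraction of known-types revenue
    (∫ x in (0:ℝ)..v, min x pret * f x)
      ≤ Real.exp 1 * (min pret pM * (1 - F (min pret pM))) ∧
    -- (2) every player retained under known-types pricing is retained under MT
    ∀ γ ∈ Set.Icc (0:ℝ) 1, ∀ rthresh : ℝ,
      rthresh ≤ max (γ * v) (v - min ((1 - γ) * v) pret) →
        rthresh ≤ max (γ * v) (v - min pret pM) := by
  have hpMv := mem_Ioo_of_isMaxOn_revenue hF' hfnonneg hfpos hv hFv hpM hpMpos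
  have hFOC := mul_density_eq_survival_of_isMaxOn (hF' pM) hpM hpMpos
  refine ⟨?_, fun γ _ r hr => hr.trans (max_sub_min_le_max_sub_min γ v pret pM)⟩
  rcases le_total pret pM with h | h
  · rw [min_eq_left h]
    calc ∫ x in 0..v, min x pret * f x ≤ ∫ x in 0..v, pret * f x :=
          integral_mul_density_mono hF' hfnonneg (by fun_prop) continuous_const hv.le
            fun x _ => min_le_right x pret
      _ = exp 1 * (exp (-1) * pret) := by
          rw [integral_const_mul, integral_eq_sub_of_hasDerivAt (fun x _ => hF' x)
            (intervalIntegrable_density hF' hfnonneg 0 v), hFv, hF0, ← mul_assoc, ← exp_add]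
          simp
      _ ≤ exp 1 * (pret * (1 - F pret)) := by
          rw [mul_comm pret]
          gcongr
          exact exp_neg_one_le_survival_of_mhr hF' hF0 hfpos hMHR hFOC hpMv ⟨hpretpos.le, h⟩
  · rw [min_eq_right h]
    calc ∫ x in 0..v, min x pret * f x ≤ ∫ x in 0..v, x * f x :=
          integral_mul_density_mono hF' hfnonneg (by fun_prop) continuous_id hv.le
            fun x _ => min_le_left x pret
      _ ≤ exp 1 * (pM * (1 - F pM)) :=
          integral_mul_density_le_of_mhr hF' hfnonneg hFv hfpos hMHR hFOC hpMv

/-- Single-round guarantee for Myerson Threshold (MT) pricing: with an MHR marginal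
value distribution (CDF `F`, density `f`, marginal values `(1−γ)v`) and a retention
distribution satisfying retention regularity determining the threshold price
`p_ret`, MT pricing (charging `min(p_ret, p_M)` where `p_M` is the Myerson optimal
posted price) earns at least a `1/e` fraction of the known-types single-round
revenue `E[min((1−γ)v, p_ret)]`, and every player retained under the known-types
prices is also retained under MT pricing. -/
theorem MT_pricing_single_round
    (v β pret pM : ℝ) (hv : 0 < v) (hβ : β ∈ Set.Ioo (0:ℝ) 1)
    (Fr fr : ℝ → ℝ)
    (hFr' : ∀ x : ℝ, HasDerivAt Fr (fr x) x)
    (hfrpos : ∀ x : ℝ, 0 ≤ x → 0 < fr x)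
    (hreg : Monotone (fun x : ℝ => x - (1 - β * Fr (v - x)) / (β * fr (v - x))))
    (hpret : pret = (1 - β * Fr (v - pret)) / (β * fr (v - pret)))
    (hpretpos : 0 < pret)
    (F f : ℝ → ℝ)
    (hF0 : F 0 = 0) (hFv : F v = 1) (hF1 : ∀ x : ℝ, F x ≤ 1)
    (hF' : ∀ x : ℝ, HasDerivAt F (f x) x)
    (hfnonneg : ∀ x : ℝ, 0 ≤ f x)
    (hfpos : ∀ x ∈ Set.Ioo (0:ℝ) v, 0 < f x)
    (hMHR : AntitoneOn (fun x => (1 - F x) / f x) (Set.Icc 0 v))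
    (hpM : IsMaxOn (fun q => q * (1 - F q)) (Set.Ici 0) pM) (hpMpos : 0 < pM) :
    -- (1) MT revenue is at least a 1/e fraction of known-types revenue
    (∫ x in (0:ℝ)..v, min x pret * f x)
      ≤ Real.exp 1 * (min pret pM * (1 - F (min pret pM))) ∧
    -- (2) every player retained under known-types pricing is retained under MT
    ∀ γ ∈ Set.Icc (0:ℝ) 1, ∀ rthresh : ℝ,
      rthresh ≤ max (γ * v) (v - min ((1 - γ) * v) pret) →
        rthresh ≤ max (γ * v) (v - min pret pM) :=
  MT_pricing_single_round_general v pret pM hv hpretpos F f hF0 hFv hF' hfnonneg hfpos hMHR hpM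
    hpMpos
end

section
/- Let γ ~ F on [0,1] with density f, and let s > 1, 0 < t < 1 be constants with F((s−1)/s) ≤ (t/(1−t))·E[γ]. Then F((s−1)/s) + ((s−1)/s)·∫_{(s−1)/s}^1 z f(z) dz ≤ ((s−t)/((1−t)(s−1)))·E[γ]. -/
/-! The constant splits as `(s - t) / ((1 - t) (s - 1)) = t / (1 - t) + s / (s - 1)`. The first
summand absorbs `F((s-1)/s)` by hypothesis; the second absorbs the tail term, since
`(s-1)/s < 1 ≤ s/(s-1)` and, `z f(z)` being nonnegative, the tail integral lies between `0`
and `E[γ]`. -/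

open intervalIntegral MeasureTheory Set

lemma div_one_sub_add_div_sub_one {s t : ℝ} (hs : s ≠ 1) (ht : t ≠ 1) :
    t / (1 - t) + s / (s - 1) = (s - t) / ((1 - t) * (s - 1)) := by
  have hs' : s - 1 ≠ 0 := sub_ne_zero.mpr hs
  have ht' : 1 - t ≠ 0 := sub_ne_zero.mpr ht.symm
  field_simp
  ring

lemma intervalIntegral_le_of_continuousOn_nonneg {g : ℝ → ℝ} {a b c : ℝ} (hca : c ≤ a)
    (hab : a ≤ b) (hg : ContinuousOn g (Icc c b)) (hg0 : ∀ x ∈ Icc c b, 0 ≤ g x) :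
    ∫ x in a..b, g x ≤ ∫ x in c..b, g x :=
  integral_mono_interval hca hab le_rfl
    (ae_restrict_of_forall_mem measurableSet_Ioc fun x hx => hg0 x (Ioc_subset_Icc_self hx))
    (hg.intervalIntegrable_of_Icc (hca.trans hab))

theorem central_utility_inequality_general
    (F f : ℝ → ℝ) (s t : ℝ)
    (hs : 1 < s) (ht1 : t < 1)
    (hfnonneg : ∀ x ∈ Set.Icc (0:ℝ) 1, 0 ≤ f x)
    (hfcont : ContinuousOn f (Set.Icc 0 1))
    (hcond : F ((s - 1) / s) ≤ (t / (1 - t)) * ∫ z in (0:ℝ)..1, z * f z) :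
    F ((s - 1) / s) + ((s - 1) / s) * ∫ z in ((s - 1) / s)..1, z * f z
      ≤ ((s - t) / ((1 - t) * (s - 1))) * ∫ z in (0:ℝ)..1, z * f z := by
  set a := (s - 1) / s
  have hs0 : 0 < s := one_pos.trans hs
  have ha0 : 0 ≤ a := div_nonneg (by linarith) hs0.le
  have ha1 : a ≤ 1 := (div_le_one hs0).mpr (by linarith)
  have hzf0 : ∀ z ∈ Icc (0:ℝ) 1, 0 ≤ z * f z := fun z hz => mul_nonneg hz.1 (hfnonneg z hz)
  have htail0 : 0 ≤ ∫ z in a..1, z * f z :=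
    integral_nonneg ha1 fun z hz => hzf0 z ⟨ha0.trans hz.1, hz.2⟩
  have htail_le : ∫ z in a..1, z * f z ≤ ∫ z in (0:ℝ)..1, z * f z :=
    intervalIntegral_le_of_continuousOn_nonneg ha0 ha1 (continuousOn_id.mul hfcont) hzf0
  have hs_coeff : 1 ≤ s / (s - 1) := (one_le_div (by linarith)).mpr (by linarith)
  rw [← div_one_sub_add_div_sub_one hs.ne' ht1.ne, add_mul]
  refine add_le_add hcond ?_
  calc a * ∫ z in a..1, z * f z ≤ ∫ z in (0:ℝ)..1, z * f z :=
        (mul_le_of_le_one_left htail0 ha1).trans htail_le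
    _ ≤ s / (s - 1) * ∫ z in (0:ℝ)..1, z * f z :=
        le_mul_of_one_le_left (htail0.trans htail_le) hs_coeff

/-- Central inequality in the proof of Theorem 4.1: for `γ ~ F` on `[0,1]` with
density `f`, `s > 1`, `0 < t < 1`, and `F((s−1)/s) ≤ (t/(1−t))·E[γ]`, one has
`F((s−1)/s) + ((s−1)/s)·∫_{(s−1)/s}^1 z f(z) dz ≤ ((s−t)/((1−t)(s−1)))·E[γ]`. -/
theorem central_utility_inequality
    (F f : ℝ → ℝ) (s t : ℝ)
    (hs : 1 < s) (ht0 : 0 < t) (ht1 : t < 1)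
    (hfnonneg : ∀ x ∈ Set.Icc (0:ℝ) 1, 0 ≤ f x)
    (hfcont : ContinuousOn f (Set.Icc 0 1))
    (hftot : (∫ x in (0:ℝ)..1, f x) = 1)
    (hF : ∀ u : ℝ, F u = ∫ x in (0:ℝ)..u, f x)
    (hcond : F ((s - 1) / s) ≤ (t / (1 - t)) * ∫ z in (0:ℝ)..1, z * f z) :
    F ((s - 1) / s) + ((s - 1) / s) * ∫ z in ((s - 1) / s)..1, z * f z
      ≤ ((s - t) / ((1 - t) * (s - 1))) * ∫ z in (0:ℝ)..1, z * f z :=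
  central_utility_inequality_general F f s t hs ht1 hfnonneg hfcont hcond
end
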